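/- arXiv:1201.2384 — 3 statements merged into one kernel-verified Lean document; each statement's English description precedes it below -/
import Mathlib

section
/- Suppose all players share the same pure strategy set S_1 (so s_i = s_1 for all i), and for each player i fix a permutation σ_i of S_1. Let U = {x ∈ Δ : x_{iα} = x_{1σ_i(α)} for all i and α}. Let φ be an incentive function whose updating map T maps Δ into Δ, and suppose φ_{1σ_i(α)}(x) = φ_{iα}(x) for every x ∈ U, every player i, and every α. Then T leaves U invariant: T(x) ∈ U for every x ∈ U. -/
open Finset

/-- Mixed strategy profile space `Δ`: player `i` has `s i + 1` pure strategies
(so every player has at least one strategy). -/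
def Δset {n : ℕ} (s : Fin n → ℕ) : Set (∀ i, Fin (s i + 1) → ℝ) :=
  {x | (∀ i α, 0 ≤ x i α) ∧ ∀ i, ∑ α, x i α = 1}

/-- The `α`-th standard unit vector of `ℝ^{m+1}` (pure strategy `α`). -/
def pureVec {m : ℕ} (α : Fin (m + 1)) : Fin (m + 1) → ℝ :=
  fun β => if β = α then 1 else 0

/-- Multilinear extension of a payoff function defined on pure profiles. -/
noncomputable def mulExt {n : ℕ} {s : Fin n → ℕ} (u : (∀ j, Fin (s j + 1)) → ℝ)
    (x : ∀ i, Fin (s i + 1) → ℝ) : ℝ :=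
  ∑ p : ∀ j, Fin (s j + 1), (∏ j, x j (p j)) * u p

/-- The updating map `T(x)_i = (x_i + Σ_α φ_{iα}(x) e_{iα}) / (1 + Σ_β φ_{iβ}(x))`. -/
noncomputable def Tmap {n : ℕ} {s : Fin n → ℕ}
    (φ : (∀ i, Fin (s i + 1) → ℝ) → ∀ i, Fin (s i + 1) → ℝ)
    (x : ∀ i, Fin (s i + 1) → ℝ) : ∀ i, Fin (s i + 1) → ℝ :=
  fun i α => (x i α + φ x i α) / (1 + ∑ β, φ x i β)

/-- `φ` is an incentive function. -/
def IsInc {n : ℕ} {s : Fin n → ℕ}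
    (φ : (∀ i, Fin (s i + 1) → ℝ) → ∀ i, Fin (s i + 1) → ℝ) : Prop :=
  (∀ x i α, x i α = 0 → 0 ≤ φ x i α) ∧ ∀ x i, (∑ β, φ x i β) ≠ -1

/-- `x` is an incentive equilibrium for `φ`. -/
def IncEq {n : ℕ} {s : Fin n → ℕ}
    (φ : (∀ i, Fin (s i + 1) → ℝ) → ∀ i, Fin (s i + 1) → ℝ)
    (x : ∀ i, Fin (s i + 1) → ℝ) : Prop :=
  ∀ i α, φ x i α = x i α * ∑ β, φ x i β

/-- `x` is a Nash equilibrium: each player's payoff is the maximum over pure deviations. -/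
def NashEq {n : ℕ} {s : Fin n → ℕ} (u : Fin n → (∀ j, Fin (s j + 1)) → ℝ)
    (x : ∀ i, Fin (s i + 1) → ℝ) : Prop :=
  ∀ i, mulExt (u i) x =
    Finset.univ.sup' Finset.univ_nonempty
      (fun α => mulExt (u i) (Function.update x i (pureVec α)))

theorem Tmap_apply_eq_of_equiv {n : ℕ} {s : Fin n → ℕ}
    (φ : (∀ i, Fin (s i + 1) → ℝ) → ∀ i, Fin (s i + 1) → ℝ)
    (x : ∀ i, Fin (s i + 1) → ℝ) {i j : Fin n} (e : Fin (s i + 1) ≃ Fin (s j + 1))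
    (hx : ∀ α, x i α = x j (e α)) (hφ : ∀ α, φ x i α = φ x j (e α)) (α : Fin (s i + 1)) :
    Tmap φ x i α = Tmap φ x j (e α) := by
  have hsum : ∑ β, φ x i β = ∑ β, φ x j β := by
    simpa only [hφ] using Fintype.sum_equiv e (fun β => φ x j (e β)) (φ x j) fun _ => rfl
  simp only [Tmap]
  rw [hsum, hx, hφ]

theorem Tmap_preserves_symmetric_set_general {n : ℕ} (hn : 0 < n) (m : ℕ)
    (σ : Fin n → Equiv.Perm (Fin (m + 1)))
    (φ : (∀ i : Fin n, Fin ((fun _ : Fin n => m) i + 1) → ℝ) →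
      ∀ i : Fin n, Fin ((fun _ : Fin n => m) i + 1) → ℝ)
    (hT : Set.MapsTo (Tmap φ) (Δset (fun _ : Fin n => m)) (Δset (fun _ : Fin n => m)))
    (hsym : ∀ x ∈ {x ∈ Δset (fun _ : Fin n => m) |
        ∀ i α, x i α = x ⟨0, hn⟩ (σ i α)},
      ∀ i α, φ x ⟨0, hn⟩ (σ i α) = φ x i α) :
    ∀ x ∈ {x ∈ Δset (fun _ : Fin n => m) | ∀ i α, x i α = x ⟨0, hn⟩ (σ i α)},
      Tmap φ x ∈ {x ∈ Δset (fun _ : Fin n => m) | ∀ i α, x i α = x ⟨0, hn⟩ (σ i α)} :=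
  fun x hx => ⟨hT hx.1, fun i => Tmap_apply_eq_of_equiv φ x (σ i) (hx.2 i)
    fun α => (hsym x hx i α).symm⟩

/-- If all players share the same strategy set and the incentive respects the
symmetries `σ_i` on `U = {x ∈ Δ | x_{iα} = x_{1 σ_i(α)}}`, then `T` leaves `U` invariant. -/
theorem Tmap_preserves_symmetric_set {n : ℕ} (hn : 0 < n) (m : ℕ)
    (σ : Fin n → Equiv.Perm (Fin (m + 1)))
    (φ : (∀ i : Fin n, Fin ((fun _ : Fin n => m) i + 1) → ℝ) →
      ∀ i : Fin n, Fin ((fun _ : Fin n => m) i + 1) → ℝ)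
    (hφ : IsInc φ)
    (hT : Set.MapsTo (Tmap φ) (Δset (fun _ : Fin n => m)) (Δset (fun _ : Fin n => m)))
    (hsym : ∀ x ∈ {x ∈ Δset (fun _ : Fin n => m) |
        ∀ i α, x i α = x ⟨0, hn⟩ (σ i α)},
      ∀ i α, φ x ⟨0, hn⟩ (σ i α) = φ x i α) :
    ∀ x ∈ {x ∈ Δset (fun _ : Fin n => m) | ∀ i α, x i α = x ⟨0, hn⟩ (σ i α)},
      Tmap φ x ∈ {x ∈ Δset (fun _ : Fin n => m) | ∀ i α, x i α = x ⟨0, hn⟩ (σ i α)} :=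
  Tmap_preserves_symmetric_set_general hn m σ φ hT hsym
end

section
/- Let BR : Δ → ∏_i ℝ^{s_i} be a (tie-broken) best-reply function: for every x ∈ Δ and player i, BR_{iα}(x) ∈ {0,1} for all α, Σ_α BR_{iα}(x) = 1, and BR_{iα}(x) = 1 implies u_i(e_{iα}, x_{-i}) = max_{γ ∈ S_i} u_i(e_{iγ}, x_{-i}). Then every incentive equilibrium of BR is a Nash equilibrium: if x̂ ∈ Δ satisfies BR_{iα}(x̂) = x̂_{iα} · Σ_β BR_{iβ}(x̂) for all i, α, then u_i(x̂) = max_{α ∈ S_i} u_i(e_{iα}, x̂_{-i}) for every player i. -/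
open Finset

theorem eq_pureVec_of_forall_eq_zero_or_one {m : ℕ} (v : Fin (m + 1) → ℝ)
    (h01 : ∀ α, v α = 0 ∨ v α = 1) (hsum : ∑ α, v α = 1) : ∃ α, v = pureVec α := by
  have hnonneg : ∀ β, 0 ≤ v β := fun β => by rcases h01 β with h | h <;> simp [h]
  obtain ⟨α, hα⟩ : ∃ α, v α = 1 := by
    by_contra! h
    simp [fun α => (h01 α).resolve_right (h α)] at hsum
  refine ⟨α, funext fun β => ?_⟩
  by_cases hβ : β = α
  · simp [pureVec, hβ, hα]
  · have hpair : v β + v α ≤ 1 := by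
      rw [← hsum, ← Finset.sum_pair hβ]
      exact Finset.sum_le_sum_of_subset_of_nonneg (Finset.subset_univ _)
        fun γ _ _ => hnonneg γ
    have hzero : v β = 0 := (h01 β).resolve_right fun h => by linarith
    simp [pureVec, hβ, hzero]

theorem IncEq.apply_eq_of_sum_eq_one {n : ℕ} {s : Fin n → ℕ}
    {φ : (∀ i, Fin (s i + 1) → ℝ) → ∀ i, Fin (s i + 1) → ℝ} {x : ∀ i, Fin (s i + 1) → ℝ}
    (heq : IncEq φ x) {i : Fin n} (hsum : ∑ β, φ x i β = 1) : φ x i = x i :=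
  funext fun α => by rw [heq i α, hsum, mul_one]

theorem best_reply_incentive_equilibrium_isNash_general {n : ℕ} (s : Fin n → ℕ)
    (u : Fin n → (∀ j, Fin (s j + 1)) → ℝ)
    (BR : (∀ i, Fin (s i + 1) → ℝ) → ∀ i, Fin (s i + 1) → ℝ)
    (hBR01 : ∀ x ∈ Δset s, ∀ i α, BR x i α = 0 ∨ BR x i α = 1)
    (hBRsum : ∀ x ∈ Δset s, ∀ i, ∑ α, BR x i α = 1)
    (hBRbest : ∀ x ∈ Δset s, ∀ i α, BR x i α = 1 →
      mulExt (u i) (Function.update x i (pureVec α)) =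
        Finset.univ.sup' Finset.univ_nonempty
          (fun γ => mulExt (u i) (Function.update x i (pureVec γ))))
    (x : ∀ i, Fin (s i + 1) → ℝ) (hx : x ∈ Δset s) (heq : IncEq BR x) :
    NashEq u x := by
  intro i
  obtain ⟨α, hα⟩ := eq_pureVec_of_forall_eq_zero_or_one (BR x i) (hBR01 x hx i) (hBRsum x hx i)
  have hxi : x i = pureVec α := (heq.apply_eq_of_sum_eq_one (hBRsum x hx i)).symm.trans hα
  have hbest := hBRbest x hx i α (by simp [hα, pureVec])
  rwa [← hxi, Function.update_eq_self] at hbest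

/-- Every incentive equilibrium of a (tie-broken) best-reply incentive is a Nash equilibrium. -/
theorem best_reply_incentive_equilibrium_isNash {n : ℕ} (hn : 0 < n) (s : Fin n → ℕ)
    (u : Fin n → (∀ j, Fin (s j + 1)) → ℝ)
    (BR : (∀ i, Fin (s i + 1) → ℝ) → ∀ i, Fin (s i + 1) → ℝ)
    (hBR01 : ∀ x ∈ Δset s, ∀ i α, BR x i α = 0 ∨ BR x i α = 1)
    (hBRsum : ∀ x ∈ Δset s, ∀ i, ∑ α, BR x i α = 1)
    (hBRbest : ∀ x ∈ Δset s, ∀ i α, BR x i α = 1 →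
      mulExt (u i) (Function.update x i (pureVec α)) =
        Finset.univ.sup' Finset.univ_nonempty
          (fun γ => mulExt (u i) (Function.update x i (pureVec γ))))
    (x : ∀ i, Fin (s i + 1) → ℝ) (hx : x ∈ Δset s) (heq : IncEq BR x) :
    NashEq u x :=
  best_reply_incentive_equilibrium_isNash_general s u BR hBR01 hBRsum hBRbest x hx heq
end

section
/- Fix ε > 0 and define the ε-Nash incentive φ^ε_{iα}(x) = (u_i(e_{iα}, x_{-i}) − u_i(x) − ε)_+, where (z)_+ = max(0, z). A point x̂ ∈ Δ is an incentive equilibrium for φ^ε (i.e., φ^ε_{iα}(x̂) = x̂_{iα} · Σ_β φ^ε_{iβ}(x̂) for all i, α) if and only if x̂ is an ε-equilibrium, i.e., u_i(x̂) ≥ u_i(e_{iα}, x̂_{-i}) − ε for every player i and every strategy α. -/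
open Finset

/-!
Since `u_i(x)` is the `x_i`-weighted average of the deviation payoffs `u_i(e_{iα}, x_{-i})`,
some strategy `β` in the support of `x_i` gains nothing by deviating, so `φ^ε_{iβ}(x) = 0`.
At an incentive equilibrium `0 = φ^ε_{iβ} = x_{iβ} Σ_γ φ^ε_{iγ}` with `x_{iβ} > 0`, so all the
(nonnegative) incentives of player `i` vanish, which is the `ε`-equilibrium condition.
-/

theorem exists_pos_and_nonpos_of_sum_mul_nonpos {ι : Type*} [Fintype ι] {w g : ι → ℝ}
    (hw : ∀ a, 0 ≤ w a) (hw_sum : ∑ a, w a = 1) (hwg : ∑ a, w a * g a ≤ 0) :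
    ∃ a, 0 < w a ∧ g a ≤ 0 := by
  by_contra! hpos
  obtain ⟨a, -, ha⟩ := exists_ne_zero_of_sum_ne_zero (hw_sum ▸ one_ne_zero)
  have ha : 0 < w a := (hw a).lt_of_ne' ha
  refine hwg.not_gt (sum_pos' (fun b _ => ?_) ⟨a, mem_univ a, mul_pos ha (hpos a ha)⟩)
  rcases (hw b).eq_or_lt with hb | hb
  · simp [← hb]
  · exact (mul_pos hb (hpos b hb)).le

section

variable {n : ℕ} {s : Fin n → ℕ}

theorem mulExt_eq_sum_mul_mulExt_update (u : (∀ j, Fin (s j + 1)) → ℝ)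
    (x : ∀ i, Fin (s i + 1) → ℝ) (i : Fin n) :
    mulExt u x = ∑ α, x i α * mulExt u (Function.update x i (pureVec α)) := by
  simp only [mulExt, Finset.mul_sum]
  rw [Finset.sum_comm]
  refine Finset.sum_congr rfl fun p _ => ?_
  set rest := ∏ j ∈ univ.erase i, x j (p j)
  have hupdate : ∀ α, ∏ j, Function.update x i (pureVec α) j (p j) = pureVec α (p i) * rest := by
    intro α
    rw [← Finset.mul_prod_erase _ _ (mem_univ i), Function.update_self]
    congr 1
    exact Finset.prod_congr rfl fun j hj => by rw [Function.update_of_ne (ne_of_mem_erase hj)]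
  simp only [hupdate, ← Finset.mul_prod_erase _ (fun j => x j (p j)) (mem_univ i)]
  rw [Finset.sum_eq_single (p i) (fun α _ hα => by simp [pureVec, Ne.symm hα]) (by simp)]
  simp only [pureVec, if_true]
  ring

theorem sum_mul_mulExt_update_sub_eq_zero (u : (∀ j, Fin (s j + 1)) → ℝ)
    {x : ∀ i, Fin (s i + 1) → ℝ} {i : Fin n} (hx : ∑ α, x i α = 1) :
    ∑ α, x i α * (mulExt u (Function.update x i (pureVec α)) - mulExt u x) = 0 := by
  simp only [mul_sub, sum_sub_distrib, ← sum_mul, hx, one_mul,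
    ← mulExt_eq_sum_mul_mulExt_update, sub_self]

theorem IncEq.apply_eq_zero_of_apply_eq_zero
    {φ : (∀ i, Fin (s i + 1) → ℝ) → ∀ i, Fin (s i + 1) → ℝ} {x : ∀ i, Fin (s i + 1) → ℝ}
    (h : IncEq φ x) {i : Fin n} (hφ : ∀ α, 0 ≤ φ x i α) {β : Fin (s i + 1)}
    (hxβ : x i β ≠ 0) (hβ : φ x i β = 0) (α : Fin (s i + 1)) : φ x i α = 0 := by
  have hsum : ∑ γ, φ x i γ = 0 := by
    simpa [hβ, hxβ, eq_comm] using h i β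
  exact (sum_eq_zero_iff_of_nonneg fun γ _ => hφ γ).1 hsum α (mem_univ α)

end

theorem epsilon_incentive_equilibrium_iff_general {n : ℕ} (s : Fin n → ℕ)
    (u : Fin n → (∀ j, Fin (s j + 1)) → ℝ) (ε : ℝ) (hε : 0 < ε)
    (φε : (∀ i, Fin (s i + 1) → ℝ) → ∀ i, Fin (s i + 1) → ℝ)
    (hdef : ∀ x i α, φε x i α =
      max 0 (mulExt (u i) (Function.update x i (pureVec α)) - mulExt (u i) x - ε))
    (x : ∀ i, Fin (s i + 1) → ℝ) (hx : x ∈ Δset s) :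
    IncEq φε x ↔
      ∀ i α, mulExt (u i) x ≥ mulExt (u i) (Function.update x i (pureVec α)) - ε := by
  have hφ_nonneg : ∀ i α, 0 ≤ φε x i α := fun i α => hdef x i α ▸ le_max_left _ _
  have hφ_eq_zero : ∀ i α, φε x i α = 0 ↔
      mulExt (u i) x ≥ mulExt (u i) (Function.update x i (pureVec α)) - ε := fun i α => by
    rw [hdef, max_eq_left_iff, sub_nonpos, sub_le_comm, ge_iff_le]
  constructor
  · intro heq i α
    obtain ⟨β, hxβ, hβ⟩ := exists_pos_and_nonpos_of_sum_mul_nonpos (hx.1 i) (hx.2 i)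
      (sum_mul_mulExt_update_sub_eq_zero (u i) (hx.2 i)).le
    have hφβ : φε x i β = 0 := (hφ_eq_zero i β).2 (by linarith)
    exact (hφ_eq_zero i α).1 (heq.apply_eq_zero_of_apply_eq_zero (hφ_nonneg i) hxβ.ne' hφβ α)
  · intro hε_eq i α
    simp only [(hφ_eq_zero i _).2 (hε_eq i _), sum_const_zero, mul_zero]

/-- For the `ε`-Nash incentive `φ^ε_{iα}(x) = (u_i(e_{iα},x_{-i}) - u_i(x) - ε)_+`,
a point of `Δ` is an incentive equilibrium iff it is an `ε`-equilibrium. -/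
theorem epsilon_incentive_equilibrium_iff {n : ℕ} (hn : 0 < n) (s : Fin n → ℕ)
    (u : Fin n → (∀ j, Fin (s j + 1)) → ℝ) (ε : ℝ) (hε : 0 < ε)
    (φε : (∀ i, Fin (s i + 1) → ℝ) → ∀ i, Fin (s i + 1) → ℝ)
    (hdef : ∀ x i α, φε x i α =
      max 0 (mulExt (u i) (Function.update x i (pureVec α)) - mulExt (u i) x - ε))
    (x : ∀ i, Fin (s i + 1) → ℝ) (hx : x ∈ Δset s) :
    IncEq φε x ↔
      ∀ i α, mulExt (u i) x ≥ mulExt (u i) (Function.update x i (pureVec α)) - ε :=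
  epsilon_incentive_equilibrium_iff_general s u ε hε φε hdef x hx
end
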